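/- For every pair of nonempty finite metric spaces X and Y, the Hausdorff distance in ℝ between their distance sets 𝒟(X) = {d_X(x,x') : x, x' ∈ X} and 𝒟(Y) = {d_Y(y,y') : y, y' ∈ Y} is at most twice their Gromov–Hausdorff distance: d_H(𝒟(X), 𝒟(Y)) ≤ 2·d_GH(X,Y). -/

import Mathlib

/-!
Realize the Gromov–Hausdorff distance `δ` by isometric embeddings `Φ`, `Ψ` of `X` and `Y` into a
common space with `d_H(Φ X, Ψ Y) = δ`; by compactness every `Φ x` has a `Ψ y` at distance at most
`δ` and conversely. If `x ↦ y` and `x' ↦ y'` in this way, then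
`|d(x, x') - d(y, y')| ≤ d(Φ x, Ψ y) + d(Φ x', Ψ y') ≤ 2δ`.
-/

open Metric

def distanceSet (X : Type*) [PseudoMetricSpace X] : Set ℝ :=
  Set.range fun p : X × X => dist p.1 p.2

theorem dist_mem_distanceSet {X : Type*} [PseudoMetricSpace X] (x x' : X) :
    dist x x' ∈ distanceSet X :=
  ⟨(x, x'), rfl⟩

theorem exists_mem_dist_le_hausdorffDist {α : Type*} [PseudoMetricSpace α] {s t : Set α} {x : α}
    (hx : x ∈ s) (hs : Bornology.IsBounded s) (ht : IsCompact t) (htne : t.Nonempty) :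
    ∃ y ∈ t, dist x y ≤ hausdorffDist s t := by
  obtain ⟨y, hy, hxy⟩ := ht.exists_infDist_eq_dist htne x
  refine ⟨y, hy, hxy ▸ infDist_le_hausdorffDist_of_mem hx ?_⟩
  exact hausdorffEDist_ne_top_of_nonempty_of_bounded ⟨x, hx⟩ htne hs ht.isBounded

section Isometry

variable {X Y Z : Type*} [PseudoMetricSpace X] [PseudoMetricSpace Y] [PseudoMetricSpace Z]
  {Φ : X → Z} {Ψ : Y → Z} {r : ℝ}

theorem Isometry.exists_dist_dist_le_two_mul (hΦ : Isometry Φ) (hΨ : Isometry Ψ)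
    (h : ∀ x, ∃ y, dist (Φ x) (Ψ y) ≤ r) (x x' : X) :
    ∃ y y' : Y, dist (dist x x') (dist y y') ≤ 2 * r := by
  obtain ⟨y, hy⟩ := h x
  obtain ⟨y', hy'⟩ := h x'
  refine ⟨y, y', ?_⟩
  calc dist (dist x x') (dist y y') = dist (dist (Φ x) (Φ x')) (dist (Ψ y) (Ψ y')) := by
        rw [hΦ.dist_eq, hΨ.dist_eq]
    _ ≤ dist (Φ x) (Ψ y) + dist (Φ x') (Ψ y') := dist_dist_dist_le _ _ _ _
    _ ≤ 2 * r := by linarith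

theorem Isometry.hausdorffDist_distanceSet_le_two_mul (hΦ : Isometry Φ) (hΨ : Isometry Ψ)
    (hr : 0 ≤ r) (hXY : ∀ x, ∃ y, dist (Φ x) (Ψ y) ≤ r) (hYX : ∀ y, ∃ x, dist (Ψ y) (Φ x) ≤ r) :
    hausdorffDist (distanceSet X) (distanceSet Y) ≤ 2 * r := by
  refine hausdorffDist_le_of_mem_dist (by linarith) ?_ ?_
  · rintro _ ⟨⟨x, x'⟩, rfl⟩
    obtain ⟨y, y', h⟩ := hΦ.exists_dist_dist_le_two_mul hΨ hXY x x'
    exact ⟨_, dist_mem_distanceSet y y', h⟩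
  · rintro _ ⟨⟨y, y'⟩, rfl⟩
    obtain ⟨x, x', h⟩ := hΨ.exists_dist_dist_le_two_mul hΦ hYX y y'
    exact ⟨_, dist_mem_distanceSet x x', h⟩

end Isometry

/-- For nonempty finite metric spaces `X` and `Y`, the Hausdorff distance in `ℝ` between
their distance sets `𝒟(X) = {d(x,x') : x, x' ∈ X}` and `𝒟(Y)` is at most twice their
Gromov–Hausdorff distance. -/
theorem hausdorffDist_distanceSets_le_two_ghDist
    (X : Type*) (Y : Type*) [MetricSpace X] [MetricSpace Y]
    [Finite X] [Finite Y] [Nonempty X] [Nonempty Y] :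
    hausdorffDist (Set.range fun p : X × X => dist p.1 p.2)
        (Set.range fun p : Y × Y => dist p.1 p.2)
      ≤ 2 * GromovHausdorff.ghDist X Y := by
  have : CompactSpace X := Finite.compactSpace
  have : CompactSpace Y := Finite.compactSpace
  obtain ⟨Φ, Ψ, hΦ, hΨ, hδ⟩ := GromovHausdorff.ghDist_eq_hausdorffDist X Y
  have hΦX : IsCompact (Set.range Φ) := isCompact_range hΦ.continuous
  have hΨY : IsCompact (Set.range Ψ) := isCompact_range hΨ.continuous
  rw [hδ]
  refine hΦ.hausdorffDist_distanceSet_le_two_mul hΨ hausdorffDist_nonneg ?_ ?_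
  · intro x
    obtain ⟨_, ⟨y, rfl⟩, hy⟩ := exists_mem_dist_le_hausdorffDist (Set.mem_range_self x)
      hΦX.isBounded hΨY (Set.range_nonempty Ψ)
    exact ⟨y, hy⟩
  · intro y
    obtain ⟨_, ⟨x, rfl⟩, hx⟩ := exists_mem_dist_le_hausdorffDist (Set.mem_range_self y)
      hΨY.isBounded hΦX (Set.range_nonempty Φ)
    exact ⟨x, hausdorffDist_comm (s := Set.range Φ) ▸ hx⟩
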